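/- Let n, d, t ≥ 1 be integers and u ∈ M_{n,d,t}. The final t-spread lexsegment L^f_t(u) is strongly stable with respect to the reversed variable order x_n > x_{n−1} > ⋯ > x_1: for every ω ∈ L^f_t(u), every index j with x_j dividing ω, and every index i > j such that x_i(ω/x_j) ∈ M_{n,d,t}, one has x_i(ω/x_j) ∈ L^f_t(u). -/
import Mathlib


open MvPolynomial

/-- A degree-`d` `t`-spread monomial of `K[x_1,…,x_n]`, recorded by its weakly increasing
(1-based) sequence of variable indices `idx 0 ≤ idx 1 ≤ ⋯` with consecutive gaps at least `t`.
For `t ≥ 1` these are exactly the `t`-spread monomials `x_{i_1}⋯x_{i_d}` with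
`i_{j+1} - i_j ≥ t`, and for `t = 0` all monomials of degree `d` (written with sorted indices). -/
structure SpreadMono (n d t : ℕ) where
  idx : Fin d → ℕ
  one_le : ∀ j, 1 ≤ idx j
  le_n : ∀ j, idx j ≤ n
  spread : ∀ (j : Fin d) (h : (j : ℕ) + 1 < d), idx j + t ≤ idx ⟨(j : ℕ) + 1, h⟩

namespace SpreadMono

variable {n d t : ℕ}

/-- The (0-based) variable of `Fin n` corresponding to the `j`-th (1-based) index. -/
def var (u : SpreadMono n d t) (j : Fin d) : Fin n :=
  ⟨u.idx j - 1, by have h1 := u.one_le j; have h2 := u.le_n j; omega⟩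

/-- The exponent vector of the monomial `x_{i_1}⋯x_{i_d}`. -/
noncomputable def expVec (u : SpreadMono n d t) : Fin n →₀ ℕ :=
  ∑ j, Finsupp.single (u.var j) 1

/-- The monomial `x_{i_1}⋯x_{i_d}` as an element of `MvPolynomial (Fin n) K`. -/
noncomputable def toMvPoly (K : Type*) [Field K] (u : SpreadMono n d t) :
    MvPolynomial (Fin n) K :=
  MvPolynomial.monomial u.expVec 1

/-- Strict lexicographic order on index sequences. -/
def seqLT (f g : Fin d → ℕ) : Prop :=
  ∃ s : Fin d, (∀ j, j < s → f j = g j) ∧ f s < g s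

/-- Lexicographic order (≤) on index sequences. -/
def seqLE (f g : Fin d → ℕ) : Prop := f = g ∨ seqLT f g

/-- `u ≥_slex v`: a monomial is `slex`-larger iff its index sequence is lex-smaller. -/
def slexGE (u v : SpreadMono n d t) : Prop := seqLE u.idx v.idx

/-- `u >_slex v`. -/
def slexGT (u v : SpreadMono n d t) : Prop := seqLT u.idx v.idx

/-- The `t`-spread lexsegment `L_t(u,v) = {w : u ≥_slex w ≥_slex v}`. -/
def lexseg (u v : SpreadMono n d t) : Set (SpreadMono n d t) :=
  {w | slexGE u w ∧ slexGE w v}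

/-- The initial `t`-spread lexsegment `L^i_t(v) = {w : w ≥_slex v}`. -/
def initialSeg (v : SpreadMono n d t) : Set (SpreadMono n d t) :=
  {w | slexGE w v}

/-- The final `t`-spread lexsegment `L^f_t(u) = {w : w ≤_slex u}`. -/
def finalSeg (u : SpreadMono n d t) : Set (SpreadMono n d t) :=
  {w | slexGE u w}

/-- The ideal of `MvPolynomial (Fin n) K` generated by a set of spread monomials. -/
noncomputable def idealOf (K : Type*) [Field K] (A : Set (SpreadMono n d t)) :
    Ideal (MvPolynomial (Fin n) K) :=
  Ideal.span ((fun w => toMvPoly K w) '' A)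

end SpreadMono

/-- `a ≤_lex b` for exponent vectors of monomials of `K[x_1,…,x_m]`, for the lexicographic
order with `x_1 > x_2 > ⋯ > x_m`: either `a = b`, or at the first position where they
differ `b` has the larger exponent. -/
def monoLE {m : ℕ} (a b : Fin m →₀ ℕ) : Prop :=
  a = b ∨ ∃ i : Fin m, (∀ j, j < i → a j = b j) ∧ a i < b i

open SpreadMono

namespace SpreadMonoAux

open SpreadMono

variable {n d t : ℕ}

lemma idx_eq_var_add_one (w : SpreadMono n d t) (j : Fin d) :
    w.idx j = (w.var j : ℕ) + 1 := by
  have h1 := w.one_le j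
  simp only [SpreadMono.var]
  omega

lemma idx_strictMono (ht : 1 ≤ t) (w : SpreadMono n d t) : StrictMono w.idx := by
  have key : ∀ b : ℕ, ∀ (hb : b < d), ∀ a : Fin d, (a : ℕ) < b →
      w.idx a < w.idx ⟨b, hb⟩ := by
    intro b
    induction b with
    | zero => intro _ a ha; omega
    | succ m ih =>
      intro hb a ha
      have hm : m < d := Nat.lt_of_succ_lt hb
      have step : w.idx ⟨m, hm⟩ < w.idx ⟨m + 1, hb⟩ := by
        have hs : w.idx ⟨m, hm⟩ + t ≤ w.idx ⟨m + 1, hb⟩ := w.spread ⟨m, hm⟩ hb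
        omega
      rcases Nat.lt_or_ge (a : ℕ) m with h | h
      · exact (ih hm a h).trans step
      · have : a = ⟨m, hm⟩ := by
          apply Fin.ext
          simp only [Fin.val_mk]
          omega
        rw [this]; exact step
  intro a b hab
  have h : (a : ℕ) < (b : ℕ) := hab
  have := key (b : ℕ) b.isLt a h
  simpa using this

lemma expVec_apply (w : SpreadMono n d t) (x : Fin n) :
    w.expVec x = (Finset.univ.filter fun j => w.var j = x).card := by
  classical
  rw [SpreadMono.expVec, Finsupp.finset_sum_apply, Finset.card_filter]
  refine Finset.sum_congr rfl fun j _ => ?_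
  rw [Finsupp.single_apply]

/-- number of indices `≤ c` -/
noncomputable def cntLE (w : SpreadMono n d t) (c : ℕ) : ℕ :=
  (Finset.univ.filter fun j => w.idx j ≤ c).card

lemma cntLE_eq_sum (w : SpreadMono n d t) (c : ℕ) :
    cntLE w c = ∑ x ∈ Finset.univ.filter (fun x : Fin n => (x : ℕ) + 1 ≤ c),
      w.expVec x := by
  classical
  have hmap : ∀ j ∈ (Finset.univ.filter fun j => w.idx j ≤ c),
      w.var j ∈ Finset.univ.filter (fun x : Fin n => (x : ℕ) + 1 ≤ c) := by
    intro j hj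
    simp only [Finset.mem_filter, Finset.mem_univ, true_and] at hj ⊢
    have := idx_eq_var_add_one w j
    omega
  rw [cntLE, Finset.card_eq_sum_card_fiberwise hmap]
  refine Finset.sum_congr rfl fun x hx => ?_
  rw [expVec_apply]
  congr 1
  ext j
  simp only [Finset.mem_filter, Finset.mem_univ, true_and] at hx ⊢
  constructor
  · rintro ⟨_, h⟩; exact h
  · intro h
    refine ⟨?_, h⟩
    have := idx_eq_var_add_one w j
    omega

lemma lt_cntLE_iff (ht : 1 ≤ t) (w : SpreadMono n d t) (q : Fin d) (c : ℕ) :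
    (q : ℕ) < cntLE w c ↔ w.idx q ≤ c := by
  classical
  constructor
  · intro h
    by_contra hc
    push_neg at hc
    have hsub : (Finset.univ.filter fun j => w.idx j ≤ c) ⊆ Finset.Iio q := by
      intro j hj
      simp only [Finset.mem_filter, Finset.mem_univ, true_and] at hj
      simp only [Finset.mem_Iio]
      by_contra hq
      push_neg at hq
      have := (idx_strictMono ht w).monotone hq
      omega
    have hcard := Finset.card_le_card hsub
    rw [Fin.card_Iio] at hcard
    have : cntLE w c ≤ (q : ℕ) := hcard
    omega
  · intro h
    have hsub : Finset.Iic q ⊆ Finset.univ.filter fun j => w.idx j ≤ c := by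
      intro j hj
      simp only [Finset.mem_Iic] at hj
      simp only [Finset.mem_filter, Finset.mem_univ, true_and]
      exact le_trans ((idx_strictMono ht w).monotone hj) h
    have hcard := Finset.card_le_card hsub
    rw [Fin.card_Iic] at hcard
    exact lt_of_lt_of_le (Nat.lt_succ_self _) hcard

lemma seqLT_trans {d : ℕ} {f g h : Fin d → ℕ}
    (h1 : seqLT f g) (h2 : seqLT g h) : seqLT f h := by
  obtain ⟨s1, he1, hl1⟩ := h1
  obtain ⟨s2, he2, hl2⟩ := h2
  rcases lt_trichotomy s1 s2 with hc | hc | hc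
  · exact ⟨s1, fun j hj => (he1 j hj).trans (he2 j (hj.trans hc)),
      by rw [← he2 s1 hc]; exact hl1⟩
  · subst hc
    exact ⟨s1, fun j hj => (he1 j hj).trans (he2 j hj), hl1.trans hl2⟩
  · exact ⟨s2, fun j hj => (he1 j (hj.trans hc)).trans (he2 j hj),
      by rw [he1 s2 hc]; exact hl2⟩

lemma seqLT_of_le_of_exists {d : ℕ} {f g : Fin d → ℕ} (hle : ∀ q, f q ≤ g q)
    (hex : ∃ q, f q < g q) : seqLT f g := by
  classical
  obtain ⟨q0, hq0⟩ := hex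
  set S := Finset.univ.filter fun q => f q < g q with hS
  have hne : S.Nonempty := ⟨q0, by simp [hS, hq0]⟩
  refine ⟨S.min' hne, fun j hj => ?_, ?_⟩
  · have hnot : j ∉ S := fun hjS => absurd (S.min'_le j hjS) (not_le.mpr hj)
    simp only [hS, Finset.mem_filter, Finset.mem_univ, true_and, not_lt] at hnot
    exact le_antisymm (hle j) hnot
  · have := S.min'_mem hne
    simpa only [hS, Finset.mem_filter, Finset.mem_univ, true_and] using this

end SpreadMonoAux

open SpreadMonoAux in

/-- **(Final lexsegments are strongly stable for the reversed order).** Let `u ∈ M_{n,d,t}`.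
For every `ω ∈ L^f_t(u)`, every `j` with `x_j ∣ ω`, and every `i > j` such that
`x_i(ω/x_j) ∈ M_{n,d,t}`, one has `x_i(ω/x_j) ∈ L^f_t(u)`. Here `j = ω.idx p` runs through
the variables dividing `ω`, `i : Fin n` is 0-based (so `i > j` reads `ω.idx p < (i : ℕ) + 1`),
and `x_i(ω/x_j)` is encoded by its exponent vector. -/

theorem stmt12 (n d t : ℕ) (hn : 1 ≤ n) (hd : 1 ≤ d) (ht : 1 ≤ t)
    (u : SpreadMono n d t) (w : SpreadMono n d t) (hw : w ∈ finalSeg u)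
    (p : Fin d) (i : Fin n) (hij : w.idx p < (i : ℕ) + 1)
    (w' : SpreadMono n d t)
    (hw' : w'.expVec = w.expVec - Finsupp.single (w.var p) 1 + Finsupp.single i 1) :
    w' ∈ finalSeg u := by
  classical
  -- single at var p is ≤ expVec
  have hvp : 1 ≤ w.expVec (w.var p) := by
    rw [expVec_apply]
    refine Finset.card_pos.mpr ⟨p, ?_⟩
    simp
  have hle : Finsupp.single (w.var p) 1 ≤ w.expVec := by
    rw [Finsupp.le_def]
    intro x
    rw [Finsupp.single_apply]
    split_ifs with h
    · rw [← h]; exact hvp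
    · exact Nat.zero_le _
  have key : w'.expVec + Finsupp.single (w.var p) 1
      = w.expVec + Finsupp.single i 1 := by
    rw [hw', add_right_comm, tsub_add_cancel_of_le hle]
  have hidx := idx_eq_var_add_one w p
  have hip : w.idx p ≤ (i : ℕ) := by omega
  have hcnt : ∀ c : ℕ, cntLE w' c + (if (w.var p : ℕ) + 1 ≤ c then 1 else 0)
      = cntLE w c + (if (i : ℕ) + 1 ≤ c then 1 else 0) := by
    intro c
    have hsum := congrArg
      (fun f : Fin n →₀ ℕ =>
        ∑ x ∈ Finset.univ.filter (fun x : Fin n => (x : ℕ) + 1 ≤ c), f x) key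
    simp only [Finsupp.coe_add, Pi.add_apply, Finset.sum_add_distrib] at hsum
    rw [cntLE_eq_sum, cntLE_eq_sum]
    have h1 : ∑ x ∈ Finset.univ.filter (fun x : Fin n => (x : ℕ) + 1 ≤ c),
        (Finsupp.single (w.var p) 1 : Fin n →₀ ℕ) x
        = if (w.var p : ℕ) + 1 ≤ c then 1 else 0 := by
      simp only [Finsupp.single_apply]
      rw [Finset.sum_ite_eq]
      simp
    have h2 : ∑ x ∈ Finset.univ.filter (fun x : Fin n => (x : ℕ) + 1 ≤ c),
        (Finsupp.single i 1 : Fin n →₀ ℕ) x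
        = if (i : ℕ) + 1 ≤ c then 1 else 0 := by
      simp only [Finsupp.single_apply]
      rw [Finset.sum_ite_eq]
      simp
    rw [← h1, ← h2]
    exact hsum
  have hmono : ∀ c, cntLE w' c ≤ cntLE w c := by
    intro c
    have h := hcnt c
    split_ifs at h <;> omega
  have hstrict : cntLE w' (w.idx p) < cntLE w (w.idx p) := by
    have h := hcnt (w.idx p)
    rw [if_pos (by omega), if_neg (by omega)] at h
    omega
  have hptle : ∀ q, w.idx q ≤ w'.idx q := by
    intro q
    have h1 : (q : ℕ) < cntLE w' (w'.idx q) :=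
      (lt_cntLE_iff ht w' q _).mpr le_rfl
    exact (lt_cntLE_iff ht w q _).mp (h1.trans_le (hmono _))
  have hcd : cntLE w (w.idx p) ≤ d := by
    have := Finset.card_filter_le (Finset.univ : Finset (Fin d))
      (fun j => w.idx j ≤ w.idx p)
    simpa [cntLE] using this
  have hq0d : cntLE w' (w.idx p) < d := lt_of_lt_of_le hstrict hcd
  set q0 : Fin d := ⟨cntLE w' (w.idx p), hq0d⟩ with hq0
  have hfq0 : w.idx q0 ≤ w.idx p :=
    (lt_cntLE_iff ht w q0 _).mp (by simpa [hq0] using hstrict)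
  have hgq0 : w.idx p < w'.idx q0 := by
    by_contra hcon
    push_neg at hcon
    have := (lt_cntLE_iff ht w' q0 _).mpr hcon
    simp [hq0] at this
  have hlt : seqLT w.idx w'.idx :=
    seqLT_of_le_of_exists hptle ⟨q0, lt_of_le_of_lt hfq0 hgq0⟩
  rcases hw with heq | hlt'
  · exact Or.inr (heq ▸ hlt)
  · exact Or.inr (seqLT_trans hlt' hlt)
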